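/- Let β > 0. For every α ∈ (0,∞): sup_{t∈(0,1)} [α h(t) + J(r_{t,β}; β) − t ln r_{t,β}] > (1+α)·J(1; β/(1+α)); and for every α ∈ (−1,0): sup_{t∈(0,1)} [α h(t) + J(r_{t,β}; β) − t ln r_{t,β}] < (1+α)·J(1; β/(1+α)). (Equivalently, Λ_Z(α) > Λ_N(α) for α > 0 and Λ_Z(α) < Λ_N(α) for α ∈ (−1,0).) -/

import Mathlib

/-- `J(r;γ) = ∫₀¹ ln(1 + r e^{−γx}) dx`. -/
noncomputable def Jint (r γ : ℝ) : ℝ :=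
  ∫ x in (0:ℝ)..1, Real.log (1 + r * Real.exp (-γ * x))

/-- `r_{t,β} = (e^{βt} − 1)/(1 − e^{β(t−1)})`. -/
noncomputable def rtβ (t β : ℝ) : ℝ :=
  (Real.exp (β * t) - 1) / (1 - Real.exp (β * (t - 1)))

/-- The binary entropy function (in nats). -/
noncomputable def binEnt (t : ℝ) : ℝ := -t * Real.log t - (1 - t) * Real.log (1 - t)

/-!
Both inequalities come from the variational formula
`J(R;γ) = sup_q [ln R ∫q + ∫h(q) − γ ∫ x q(x) dx]` over profiles `q : [0,1] → (0,1)`, the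
integrated Fenchel–Young identity `ln(1+y) = max_q [q ln y + h(q)]`; the supremum is attained
at the Fermi profile `σ_{R,γ}(x) = R e^{−γx}/(1 + R e^{−γx})`, and `r_{t,β}` is exactly the fugacity
whose Fermi profile has mass `t`.

For `α > 0`, test the formula for `J(r_{t,β};β)` with the optimal profile `σ` of `J(1;β/(1+α))`
and `t = ∫σ`; for `α < 0`, test the formula for `J(1;β/(1+α))` with the optimal profile of
`J(r_{t,β};β)`. In both cases the two sides differ by at least `|α|(h(∫σ) − ∫h(σ))`, which is
positive by strict Jensen since `σ` is not constant. For `α < 0` the pointwise strict inequality is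
made uniform by compactness: the objective is continuous in `t` and bounded by `(1+α)h(t)`, which
vanishes at the endpoints while `J(1;·) > 0`.
-/

open Real Set
open MeasureTheory (volume)

lemma binEnt_eq_binEntropy : binEnt = binEntropy := by
  ext t
  simp only [binEnt, binEntropy, log_inv, mul_neg]
  ring

lemma continuous_binEnt : Continuous binEnt :=
  binEnt_eq_binEntropy ▸ binEntropy_continuous

lemma binEnt_le_log_two (t : ℝ) : binEnt t ≤ log 2 :=
  binEnt_eq_binEntropy ▸ binEntropy_le_log_two

lemma binEnt_lt_crossEnt {p q : ℝ} (hp : p ∈ Ioo 0 1) (hq : q ∈ Ioo 0 1) (hqp : q ≠ p) :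
    binEnt q < -q * log p - (1 - q) * log (1 - p) := by
  obtain ⟨hp0, hp1⟩ := hp
  obtain ⟨hq0, hq1⟩ := hq
  have h₁ : log (p / q) < p / q - 1 :=
    log_lt_sub_one_of_pos (by positivity) (by rwa [ne_eq, div_eq_one_iff_eq hq0.ne', eq_comm])
  have h₂ : log ((1 - p) / (1 - q)) < (1 - p) / (1 - q) - 1 :=
    log_lt_sub_one_of_pos (div_pos (by linarith) (by linarith))
      (by rw [ne_eq, div_eq_one_iff_eq (by linarith)]; intro h; exact hqp (by linarith))
  rw [log_div hp0.ne' hq0.ne'] at h₁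
  rw [log_div (by linarith) (by linarith)] at h₂
  have e₁ : q * (p / q - 1) = p - q := by field_simp
  have e₂ : (1 - q) * ((1 - p) / (1 - q) - 1) = q - p := by
    field_simp [(by linarith : (1 - q) ≠ 0)]
    ring
  have k₁ := mul_lt_mul_of_pos_left h₁ hq0
  have k₂ := mul_lt_mul_of_pos_left h₂ (by linarith : 0 < 1 - q)
  rw [e₁] at k₁
  rw [e₂] at k₂
  rw [binEnt]
  linarith

lemma binEnt_le_crossEnt {p q : ℝ} (hp : p ∈ Ioo 0 1) (hq : q ∈ Ioo 0 1) :
    binEnt q ≤ -q * log p - (1 - q) * log (1 - p) := by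
  rcases eq_or_ne q p with rfl | hqp
  · exact le_rfl
  · exact (binEnt_lt_crossEnt hp hq hqp).le

lemma crossEnt_div_one_add {q y : ℝ} (hy : 0 < y) :
    -q * log (y / (1 + y)) - (1 - q) * log (1 - y / (1 + y)) = log (1 + y) - q * log y := by
  have h1y : (1 + y) ≠ 0 := by positivity
  rw [show 1 - y / (1 + y) = 1 / (1 + y) by field_simp; ring,
    log_div hy.ne' h1y, log_div one_ne_zero h1y, log_one]
  ring

lemma div_one_add_mem_Ioo {y : ℝ} (hy : 0 < y) : y / (1 + y) ∈ Ioo 0 1 :=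
  ⟨by positivity, (div_lt_one (by positivity)).2 (by linarith)⟩

lemma mul_log_add_binEnt_le {q y : ℝ} (hq : q ∈ Ioo 0 1) (hy : 0 < y) :
    q * log y + binEnt q ≤ log (1 + y) := by
  have := binEnt_le_crossEnt (div_one_add_mem_Ioo hy) hq
  rw [crossEnt_div_one_add hy] at this
  linarith

lemma mul_log_add_binEnt_div_one_add {y : ℝ} (hy : 0 < y) :
    y / (1 + y) * log y + binEnt (y / (1 + y)) = log (1 + y) := by
  rw [binEnt, crossEnt_div_one_add hy]
  ring

section Profile

variable {q : ℝ → ℝ}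

lemma integral_mem_Ioo (hq : ContinuousOn q (Icc 0 1)) (hq01 : ∀ x ∈ Icc 0 1, q x ∈ Ioo 0 1) :
    ∫ x in (0:ℝ)..1, q x ∈ Ioo 0 1 := by
  have hqi := hq.intervalIntegrable_of_Icc (μ := volume) zero_le_one
  constructor
  · exact intervalIntegral.intervalIntegral_pos_of_pos_on hqi
      (fun x hx => (hq01 x (Ioo_subset_Icc_self hx)).1) one_pos
  · have := intervalIntegral.intervalIntegral_pos_of_pos_on (intervalIntegrable_const.sub hqi)
      (fun x hx => sub_pos.2 (hq01 x (Ioo_subset_Icc_self hx)).2) one_pos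
    rw [intervalIntegral.integral_sub intervalIntegrable_const hqi] at this
    simpa using this

lemma integral_binEnt_lt (hq : ContinuousOn q (Icc 0 1)) (hq01 : ∀ x ∈ Icc 0 1, q x ∈ Ioo 0 1)
    (hne : ∃ c ∈ Icc (0:ℝ) 1, q c ≠ ∫ x in (0:ℝ)..1, q x) :
    ∫ x in (0:ℝ)..1, binEnt (q x) < binEnt (∫ x in (0:ℝ)..1, q x) := by
  set t := ∫ x in (0:ℝ)..1, q x
  have ht := integral_mem_Ioo hq hq01
  have hqi := hq.intervalIntegrable_of_Icc (μ := volume) zero_le_one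
  calc ∫ x in (0:ℝ)..1, binEnt (q x)
      < ∫ x in (0:ℝ)..1, ((log (1 - t) - log t) * q x - log (1 - t)) := by
        refine intervalIntegral.integral_lt_integral_of_continuousOn_of_le_of_exists_lt one_pos
          (continuous_binEnt.comp_continuousOn hq) (by fun_prop) (fun x hx => ?_) ?_
        · linarith [binEnt_le_crossEnt ht (hq01 x (Ioc_subset_Icc_self hx))]
        · obtain ⟨c, hc, hct⟩ := hne
          exact ⟨c, hc, by linarith [binEnt_lt_crossEnt ht (hq01 c hc) hct]⟩
    _ = binEnt t := by
        rw [intervalIntegral.integral_sub (hqi.const_mul _) intervalIntegrable_const,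
          intervalIntegral.integral_const_mul, binEnt]
        simp only [intervalIntegral.integral_const, sub_zero, one_smul]
        ring

end Profile

noncomputable def fermi (r γ x : ℝ) : ℝ := r * exp (-γ * x) / (1 + r * exp (-γ * x))

section Fermi

variable {r γ : ℝ}

lemma fermi_mem_Ioo (hr : 0 < r) (x : ℝ) : fermi r γ x ∈ Ioo 0 1 :=
  div_one_add_mem_Ioo (by positivity)

lemma continuous_fermi (hr : 0 < r) : Continuous (fermi r γ) := by
  unfold fermi
  exact Continuous.div (by fun_prop) (by fun_prop) fun x => by positivity

lemma fermi_one_lt_fermi_zero (hr : 0 < r) (hγ : 0 < γ) : fermi r γ 1 < fermi r γ 0 := by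
  have h : r * exp (-γ) < r := mul_lt_of_lt_one_right hr (exp_lt_one_iff.2 (by linarith))
  simp only [fermi, mul_zero, exp_zero, mul_one]
  rw [div_lt_div_iff₀ (by positivity) (by positivity)]
  nlinarith

lemma hasDerivAt_log_one_add_mul_exp (hr : 0 < r) (x : ℝ) :
    HasDerivAt (fun x => log (1 + r * exp (-γ * x))) (-γ * fermi r γ x) x := by
  have h := ((((hasDerivAt_id x).const_mul (-γ)).exp).const_mul r).const_add 1
  refine (h.log (by positivity)).congr_deriv ?_
  simp only [fermi, id]
  ring

lemma mul_integral_fermi (hr : 0 < r) :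
    γ * ∫ x in (0:ℝ)..1, fermi r γ x = log (1 + r) - log (1 + r * exp (-γ)) := by
  have h := intervalIntegral.integral_eq_sub_of_hasDerivAt
    (fun x _ => hasDerivAt_log_one_add_mul_exp (γ := γ) hr x)
    (((continuous_fermi hr).const_mul (-γ)).intervalIntegrable 0 1)
  rw [intervalIntegral.integral_const_mul] at h
  simp only [mul_one, mul_zero, exp_zero] at h
  linarith

lemma integral_binEnt_fermi_lt (hr : 0 < r) (hγ : 0 < γ) :
    ∫ x in (0:ℝ)..1, binEnt (fermi r γ x) < binEnt (∫ x in (0:ℝ)..1, fermi r γ x) := by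
  refine integral_binEnt_lt (continuous_fermi hr).continuousOn (fun x _ => fermi_mem_Ioo hr x) ?_
  by_contra! hconst
  exact (fermi_one_lt_fermi_zero hr hγ).ne
    ((hconst 1 (right_mem_Icc.2 zero_le_one)).trans (hconst 0 (left_mem_Icc.2 zero_le_one)).symm)

end Fermi

noncomputable def freeEnergy (γ : ℝ) (q : ℝ → ℝ) : ℝ :=
  (∫ x in (0:ℝ)..1, binEnt (q x)) - γ * ∫ x in (0:ℝ)..1, x * q x

section FreeEnergy

variable {γ : ℝ} {q : ℝ → ℝ}

lemma integral_mul_add_binEnt_sub (hq : ContinuousOn q (Icc 0 1)) (c : ℝ) :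
    ∫ x in (0:ℝ)..1, (c * q x + binEnt (q x) - γ * (x * q x))
      = c * (∫ x in (0:ℝ)..1, q x) + freeEnergy γ q := by
  have hqi := hq.intervalIntegrable_of_Icc (μ := volume) zero_le_one
  have hhi : IntervalIntegrable (fun x => binEnt (q x)) volume 0 1 :=
    (continuous_binEnt.comp_continuousOn hq).intervalIntegrable_of_Icc zero_le_one
  have hxi : IntervalIntegrable (fun x => x * q x) volume 0 1 :=
    (continuousOn_id.mul hq).intervalIntegrable_of_Icc zero_le_one
  rw [intervalIntegral.integral_sub ((hqi.const_mul c).add hhi) (hxi.const_mul γ),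
    intervalIntegral.integral_add (hqi.const_mul c) hhi, intervalIntegral.integral_const_mul,
    intervalIntegral.integral_const_mul, freeEnergy]
  ring

lemma log_mul_integral_add_freeEnergy_le_Jint {R : ℝ} (hR : 0 < R) (hq : ContinuousOn q (Icc 0 1))
    (hq01 : ∀ x ∈ Icc 0 1, q x ∈ Ioo 0 1) :
    log R * (∫ x in (0:ℝ)..1, q x) + freeEnergy γ q ≤ Jint R γ := by
  rw [← integral_mul_add_binEnt_sub hq, Jint]
  refine intervalIntegral.integral_mono_on zero_le_one ?_ ?_ fun x hx => ?_
  · exact ContinuousOn.intervalIntegrable_of_Icc zero_le_one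
      (by have := continuous_binEnt.comp_continuousOn hq; fun_prop)
  · exact (Continuous.log (by fun_prop) fun x => by positivity).intervalIntegrable 0 1
  · have h := mul_log_add_binEnt_le (hq01 x hx) (by positivity : 0 < R * exp (-γ * x))
    rw [log_mul hR.ne' (exp_pos _).ne', log_exp] at h
    linarith

lemma Jint_eq_log_mul_integral_add_freeEnergy {r : ℝ} (hr : 0 < r) :
    Jint r γ = log r * (∫ x in (0:ℝ)..1, fermi r γ x) + freeEnergy γ (fermi r γ) := by
  rw [← integral_mul_add_binEnt_sub (continuous_fermi hr).continuousOn, Jint]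
  refine intervalIntegral.integral_congr fun x _ => ?_
  have h := mul_log_add_binEnt_div_one_add (by positivity : 0 < r * exp (-γ * x))
  rw [log_mul hr.ne' (exp_pos _).ne', log_exp] at h
  simp only [fermi]
  linarith

lemma freeEnergy_le_integral_binEnt (hγ : 0 ≤ γ) (hq : ∀ x ∈ Icc 0 1, 0 ≤ q x) :
    freeEnergy γ q ≤ ∫ x in (0:ℝ)..1, binEnt (q x) := by
  have : 0 ≤ ∫ x in (0:ℝ)..1, x * q x :=
    intervalIntegral.integral_nonneg zero_le_one fun x hx => mul_nonneg hx.1 (hq x hx)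
  rw [freeEnergy]
  linarith [mul_nonneg hγ this]

lemma mul_freeEnergy_div {c : ℝ} (hc : c ≠ 0) (β : ℝ) :
    c * freeEnergy (β / c) q = freeEnergy β q + (c - 1) * ∫ x in (0:ℝ)..1, binEnt (q x) := by
  rw [freeEnergy, freeEnergy]
  field_simp
  ring

end FreeEnergy

lemma Jint_one_pos (γ : ℝ) : 0 < Jint 1 γ :=
  intervalIntegral.intervalIntegral_pos_of_pos
    ((Continuous.log (by fun_prop) fun x => by positivity).intervalIntegrable 0 1)
    (fun x => log_pos (by simp [exp_pos])) one_pos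

lemma continuousOn_Jint (γ : ℝ) : ContinuousOn (fun r => Jint r γ) (Ici 0) := by
  -- clamping `r` at `0` keeps the argument of `log` positive: the integrand is jointly continuous
  have h : Continuous fun r => ∫ x in (0:ℝ)..1, log (1 + max r 0 * exp (-γ * x)) :=
    intervalIntegral.continuous_parametric_intervalIntegral_of_continuous'
      (Continuous.log (by fun_prop) fun p => by positivity) 0 1
  refine h.continuousOn.congr fun r hr => ?_
  simp only [Jint, max_eq_left (mem_Ici.1 hr)]

section Fugacity

variable {t β : ℝ}

lemma one_sub_exp_mul_sub_one_ne_zero (hβ : β ≠ 0) (ht : t ≠ 1) : 1 - exp (β * (t - 1)) ≠ 0 := by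
  rw [sub_ne_zero, ne_comm, Ne, exp_eq_one_iff]
  exact mul_ne_zero hβ (sub_ne_zero.2 ht)

lemma rtβ_pos (hβ : 0 < β) (ht : t ∈ Ioo 0 1) : 0 < rtβ t β := by
  have h₁ : 1 < exp (β * t) := one_lt_exp_iff.2 (mul_pos hβ ht.1)
  have h₂ : exp (β * (t - 1)) < 1 :=
    exp_lt_one_iff.2 (mul_neg_of_pos_of_neg hβ (by linarith [ht.2]))
  exact div_pos (by linarith) (by linarith)

lemma continuousOn_rtβ (hβ : β ≠ 0) : ContinuousOn (fun t => rtβ t β) {1}ᶜ := by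
  unfold rtβ
  exact ContinuousOn.div (by fun_prop) (by fun_prop) fun t ht =>
    one_sub_exp_mul_sub_one_ne_zero hβ ht

lemma one_add_rtβ (hβ : β ≠ 0) (ht : t ≠ 1) :
    1 + rtβ t β = exp (β * t) * (1 + rtβ t β * exp (-β)) := by
  have hsplit : exp (β * (t - 1)) = exp (β * t) * exp (-β) := by rw [← exp_add]; ring_nf
  have hden := one_sub_exp_mul_sub_one_ne_zero hβ ht
  rw [hsplit] at hden
  rw [rtβ, hsplit]
  field_simp
  ring

lemma integral_fermi_rtβ (hβ : 0 < β) (ht : t ∈ Ioo 0 1) :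
    ∫ x in (0:ℝ)..1, fermi (rtβ t β) β x = t := by
  have hr := rtβ_pos hβ ht
  have h := mul_integral_fermi (γ := β) hr
  rw [one_add_rtβ hβ.ne' ht.2.ne, log_mul (exp_pos _).ne' (by positivity), log_exp,
    add_sub_cancel_right] at h
  exact mul_left_cancel₀ hβ.ne' h

end Fugacity

noncomputable def objectiveZ (α β t : ℝ) : ℝ :=
  α * binEnt t + Jint (rtβ t β) β - t * log (rtβ t β)

section Objective

variable {α β t : ℝ}

lemma objectiveZ_eq (hβ : 0 < β) (ht : t ∈ Ioo 0 1) :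
    objectiveZ α β t = α * binEnt t + freeEnergy β (fermi (rtβ t β) β) := by
  rw [objectiveZ, Jint_eq_log_mul_integral_add_freeEnergy (rtβ_pos hβ ht),
    integral_fermi_rtβ hβ ht]
  ring

lemma objectiveZ_le (hβ : 0 < β) (ht : t ∈ Ioo 0 1) : objectiveZ α β t ≤ (1 + α) * binEnt t := by
  have hr := rtβ_pos hβ ht
  have hjensen := integral_binEnt_fermi_lt hr hβ
  rw [integral_fermi_rtβ hβ ht] at hjensen
  have := freeEnergy_le_integral_binEnt (q := fermi (rtβ t β) β) hβ.le
    fun x _ => (fermi_mem_Ioo hr x).1.le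
  rw [objectiveZ_eq hβ ht]
  linarith

lemma continuousOn_objectiveZ (hβ : 0 < β) : ContinuousOn (objectiveZ α β) (Ioo 0 1) := by
  have hsub : Ioo (0:ℝ) 1 ⊆ {1}ᶜ := fun t ht => ht.2.ne
  have hr : ContinuousOn (fun t => rtβ t β) (Ioo 0 1) := (continuousOn_rtβ hβ.ne').mono hsub
  have hJ : ContinuousOn (fun t => Jint (rtβ t β) β) (Ioo 0 1) :=
    (continuousOn_Jint β).comp hr fun t ht => (rtβ_pos hβ ht).le
  have hlog : ContinuousOn (fun t => log (rtβ t β)) (Ioo 0 1) :=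
    hr.log fun t ht => (rtβ_pos hβ ht).ne'
  unfold objectiveZ
  have := continuous_binEnt
  fun_prop

lemma exists_lt_objectiveZ (hβ : 0 < β) (hα : 0 < α) :
    ∃ t ∈ Ioo (0:ℝ) 1, (1 + α) * Jint 1 (β / (1 + α)) < objectiveZ α β t := by
  set σ := fermi 1 (β / (1 + α))
  have hσ : Continuous σ := continuous_fermi one_pos
  have hσ01 : ∀ x ∈ Icc (0:ℝ) 1, σ x ∈ Ioo 0 1 := fun x _ => fermi_mem_Ioo one_pos x
  set t := ∫ x in (0:ℝ)..1, σ x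
  have ht : t ∈ Ioo 0 1 := integral_mem_Ioo hσ.continuousOn hσ01
  refine ⟨t, ht, ?_⟩
  have hN : (1 + α) * Jint 1 (β / (1 + α))
      = freeEnergy β σ + α * ∫ x in (0:ℝ)..1, binEnt (σ x) := by
    rw [Jint_eq_log_mul_integral_add_freeEnergy one_pos, log_one, zero_mul, zero_add,
      mul_freeEnergy_div (by linarith)]
    ring
  have hdual := log_mul_integral_add_freeEnergy_le_Jint (γ := β) (rtβ_pos hβ ht)
    hσ.continuousOn hσ01
  have hgap := mul_lt_mul_of_pos_left
    (integral_binEnt_fermi_lt (γ := β / (1 + α)) one_pos (by positivity)) hα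
  rw [objectiveZ, hN]
  linarith

lemma objectiveZ_lt (hβ : 0 < β) (hα : α ∈ Ioo (-1) 0) (ht : t ∈ Ioo 0 1) :
    objectiveZ α β t < (1 + α) * Jint 1 (β / (1 + α)) := by
  have hr := rtβ_pos hβ ht
  set σ := fermi (rtβ t β) β
  have hdual := log_mul_integral_add_freeEnergy_le_Jint (γ := β / (1 + α)) (q := σ) one_pos
    (continuous_fermi hr).continuousOn fun x _ => fermi_mem_Ioo hr x
  rw [log_one, zero_mul, zero_add] at hdual
  have hN := mul_le_mul_of_nonneg_left hdual (by linarith [hα.1] : 0 ≤ 1 + α)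
  rw [mul_freeEnergy_div (by linarith [hα.1])] at hN
  have hjensen := integral_binEnt_fermi_lt hr hβ
  rw [integral_fermi_rtβ hβ ht] at hjensen
  have hgap := mul_lt_mul_of_neg_left hjensen hα.2
  rw [objectiveZ_eq hβ ht]
  linarith

end Objective

lemma iSup_Ioo_lt_of_continuousOn {f g : ℝ → ℝ} {a b c : ℝ} (hab : a < b)
    (hf : ContinuousOn f (Ioo a b)) (hg : ContinuousOn g (Icc a b))
    (hfg : ∀ t ∈ Ioo a b, f t ≤ g t) (hfc : ∀ t ∈ Ioo a b, f t < c)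
    (hga : g a < c) (hgb : g b < c) :
    ⨆ t : Ioo a b, f t < c := by
  obtain ⟨d, hd, hdc⟩ := exists_between (max_lt hga hgb)
  set K := Icc a b ∩ g ⁻¹' Ici d
  have hK : IsCompact K := isCompact_Icc.of_isClosed_subset
    (hg.preimage_isClosed_of_isClosed isClosed_Icc isClosed_Ici) inter_subset_left
  have hKsub : K ⊆ Ioo a b := by
    rintro t ⟨⟨hat, htb⟩, hdt⟩
    have hda := (le_max_left _ _).trans_lt hd
    have hdb := (le_max_right _ _).trans_lt hd
    refine ⟨hat.lt_of_ne ?_, htb.lt_of_ne ?_⟩ <;> rintro rfl <;>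
      simp only [mem_preimage, mem_Ici] at hdt <;> linarith
  obtain ⟨M, hMc, hM⟩ : ∃ M < c, ∀ t ∈ K, f t ≤ M := by
    rcases K.eq_empty_or_nonempty with hKe | hKne
    · exact ⟨d, hdc, by simp [hKe]⟩
    · obtain ⟨t₀, ht₀, hmax⟩ := hK.exists_isMaxOn hKne (hf.mono hKsub)
      exact ⟨f t₀, hfc t₀ (hKsub ht₀), fun t ht => hmax ht⟩
  have : Nonempty (Ioo a b) := (nonempty_Ioo.2 hab).to_subtype
  refine (ciSup_le fun t => ?_).trans_lt (max_lt hMc hdc)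
  by_cases hdt : d ≤ g t
  · exact (hM t ⟨Ioo_subset_Icc_self t.2, hdt⟩).trans (le_max_left _ _)
  · exact (hfg t t.2).trans ((not_le.1 hdt).le.trans (le_max_right _ _))

theorem scgf_order (β : ℝ) (hβ : 0 < β) :
    (∀ α : ℝ, 0 < α →
      (⨆ t : Set.Ioo (0:ℝ) 1,
          (α * binEnt t + Jint (rtβ t β) β - (t : ℝ) * Real.log (rtβ t β)))
        > (1 + α) * Jint 1 (β / (1 + α))) ∧
    (∀ α : ℝ, α ∈ Set.Ioo (-1:ℝ) 0 →
      (⨆ t : Set.Ioo (0:ℝ) 1,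
          (α * binEnt t + Jint (rtβ t β) β - (t : ℝ) * Real.log (rtβ t β)))
        < (1 + α) * Jint 1 (β / (1 + α))) := by
  refine ⟨fun α hα => ?_, fun α hα => ?_⟩
  · obtain ⟨t, ht, hlt⟩ := exists_lt_objectiveZ hβ hα
    have hbdd : BddAbove (range fun t : Ioo (0:ℝ) 1 => objectiveZ α β t) := by
      refine ⟨(1 + α) * log 2, ?_⟩
      rintro _ ⟨s, rfl⟩
      exact (objectiveZ_le hβ s.2).trans
        (mul_le_mul_of_nonneg_left (binEnt_le_log_two s) (by linarith))
    exact hlt.trans_le (le_ciSup hbdd ⟨t, ht⟩)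
  · have hN := mul_pos (by linarith [hα.1] : 0 < 1 + α) (Jint_one_pos (β / (1 + α)))
    exact iSup_Ioo_lt_of_continuousOn zero_lt_one (continuousOn_objectiveZ hβ)
      (continuous_const.mul continuous_binEnt).continuousOn
      (fun t ht => objectiveZ_le hβ ht) (fun t ht => objectiveZ_lt hβ hα ht)
      (by simpa [binEnt] using hN) (by simpa [binEnt] using hN)
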